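/- Let φ be a complete flow on a topological space X and let U₀ ⊆ X be a subset that is dynamically convex for φ (if x, φ(t, x) ∈ U₀ with t ≥ 0 then φ(s, x) ∈ U₀ for s ∈ [0, t]). For T > 0 define U = φ(-T)⁻¹-image intersection, i.e. U = {x : φ(-T, x) ∈ U₀} ∩ U₀ ∩ {x : φ(T, x) ∈ U₀} — equivalently U = φ_{-T}(U₀) ∩ U₀ ∩ φ_T(U₀). Then U is also dynamically convex for φ. -/

import Mathlib

/-! Each of the three sets is dynamically convex: `U₀` by hypothesis, and its preimages under
the time-`±T` maps because these commute with every `φ t`. -/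

/-- A subset `A` is dynamically convex for the flow `φ` if forward trajectory segments
with endpoints in `A` stay in `A`. -/
def DynConvex {X : Type*} (φ : ℝ → X → X) (A : Set X) : Prop :=
  ∀ x t, x ∈ A → 0 ≤ t → φ t x ∈ A → ∀ s ∈ Set.Icc 0 t, φ s x ∈ A

namespace DynConvex

variable {X : Type*} {φ : ℝ → X → X} {A B : Set X}

theorem inter (hA : DynConvex φ A) (hB : DynConvex φ B) : DynConvex φ (A ∩ B) :=
  fun x t hx ht hxt s hs => ⟨hA x t hx.1 ht hxt.1 s hs, hB x t hx.2 ht hxt.2 s hs⟩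

theorem preimage {f : X → X} (hf : ∀ t x, f (φ t x) = φ t (f x)) (hA : DynConvex φ A) :
    DynConvex φ (f ⁻¹' A) := by
  intro x t hx ht hxt s hs
  rw [Set.mem_preimage, hf] at hxt ⊢
  exact hA (f x) t hx ht hxt s hs

end DynConvex

theorem flow_comm {X : Type*} {φ : ℝ → X → X} (hgrp : ∀ t s x, φ t (φ s x) = φ (t + s) x)
    (τ t : ℝ) (x : X) : φ τ (φ t x) = φ t (φ τ x) := by
  rw [hgrp, hgrp, add_comm]

theorem inter_dynConvex_general {X : Type*} (φ : ℝ → X → X)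
    (hgrp : ∀ t s x, φ t (φ s x) = φ (t + s) x)
    (U₀ : Set X) (hconv : DynConvex φ U₀) (T : ℝ)
    (U : Set X) (hU : U = {x | φ (-T) x ∈ U₀} ∩ U₀ ∩ {x | φ T x ∈ U₀}) :
    DynConvex φ U := by
  subst hU
  exact ((hconv.preimage (flow_comm hgrp (-T))).inter hconv).inter
    (hconv.preimage (flow_comm hgrp T))

/-- If `U₀` is dynamically convex for a complete flow `φ` and `T > 0`, then
`U = φ₋ₜ(U₀) ∩ U₀ ∩ φₜ(U₀) = {x : φ(-T,x) ∈ U₀} ∩ U₀ ∩ {x : φ(T,x) ∈ U₀}` is also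
dynamically convex. -/
theorem inter_dynConvex {X : Type*} (φ : ℝ → X → X)
    (h0 : ∀ x, φ 0 x = x) (hgrp : ∀ t s x, φ t (φ s x) = φ (t + s) x)
    (U₀ : Set X) (hconv : DynConvex φ U₀) (T : ℝ) (hT : 0 < T)
    (U : Set X) (hU : U = {x | φ (-T) x ∈ U₀} ∩ U₀ ∩ {x | φ T x ∈ U₀}) :
    DynConvex φ U :=
  inter_dynConvex_general φ hgrp U₀ hconv T U hU
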